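/- Let $k$ be a field of characteristic zero, and let $A_m = k[x_i^{(j)} : 1 \le i \le n,\ 0 \le j \le m]$ with the $k$-linear derivation $d$ determined by $d(x_i^{(j)}) = x_i^{(j+1)}$ for $j < m$, $d(x_i^{(m)}) = 0$, and the Leibniz rule. Then for every polynomial $f \in k[x_1, \ldots, x_n]$, in the ring $A_m[t]/(t^{m+1})$ one has $f\big(\sum_j x_1^{(j)} t^j/j!, \ldots, \sum_j x_n^{(j)} t^j/j!\big) = \sum_{j=0}^{m} (d^j f) \, t^j/j!$, where $f$ on the left is evaluated with $x_i$ substituted by $\sum_j x_i^{(j)} t^j/j!$ and on the right $x_i$ is substituted by $x_i^{(0)}$ before applying $d$. -/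

import Mathlib

open Polynomial

/-- The coordinate ring `A_m = k[x_i^{(j)}]` of the jet space of `𝔸ⁿ`. -/
abbrev JetRing (k : Type*) [CommRing k] (n m : ℕ) := MvPolynomial (Fin n × Fin (m + 1)) k

/-- The derivation `d` with `d(x_i^{(j)}) = x_i^{(j+1)}` and `d(x_i^{(m)}) = 0`. -/
noncomputable def jetD (k : Type*) [CommRing k] (n m : ℕ) :
    Derivation k (JetRing k n m) (JetRing k n m) :=
  MvPolynomial.mkDerivation k (fun p =>
    if h : (p.2 : ℕ) + 1 < m + 1 then MvPolynomial.X (p.1, ⟨(p.2 : ℕ) + 1, h⟩) else 0)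

/-- The truncated polynomial ring `A_m[t]/(t^(m+1))`. -/
abbrev JetTrunc (k : Type*) [CommRing k] (n m : ℕ) : Type _ :=
  (JetRing k n m)[X] ⧸ Ideal.span {(X : (JetRing k n m)[X]) ^ (m + 1)}

/-- Quotient map `A_m[t] → A_m[t]/(t^(m+1))`. -/
noncomputable def jetMk (k : Type*) [CommRing k] (n m : ℕ) :
    (JetRing k n m)[X] →+* JetTrunc k n m :=
  Ideal.Quotient.mk _

/-!
Since `k` has characteristic zero, `a ↦ ∑ₛ Dˢa · tˢ / s!` is a `k`-algebra map `A → A⟦t⟧` for any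
derivation `D` of a `k`-algebra `A`: additivity is clear and multiplicativity is the iterated
Leibniz rule `Dˢ(ab) = ∑ (s choose i) Dⁱa Dʲb`, because `(s choose i) / s! = 1 / (i! j!)`.
Reducing modulo `t^(m+1)` is a ring map, so for the jet derivation `d` we get a `k`-algebra map
`A_m → A_m[t]/(t^(m+1))`. It sends `x_i^{(0)}` to `∑ⱼ x_i^{(j)} tʲ / j!`, so the image of
`f(x^{(0)})`, which is the right-hand side, is `f` evaluated at these sums.
-/

open Finset

namespace Derivation

section Leibniz

variable {R A : Type*} [CommSemiring R] [CommSemiring A] [Algebra R A]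

theorem iterate_map_mul (D : Derivation R A A) (n : ℕ) (a b : A) :
    (⇑D)^[n] (a * b) =
      ∑ ij ∈ antidiagonal n, n.choose ij.1 • ((⇑D)^[ij.1] a * (⇑D)^[ij.2] b) := by
  induction n with
  | zero => simp
  | succ n ih =>
    rw [sum_antidiagonal_choose_succ_nsmul (fun i j => (⇑D)^[i] a * (⇑D)^[j] b) n]
    simp only [Function.iterate_succ_apply', ih, map_sum, map_nsmul, leibniz, smul_eq_mul,
      smul_add, sum_add_distrib]
    refine congrArg (_ + ·) (sum_congr rfl fun ij hij => ?_)
    rw [n.choose_symm_of_eq_add (mem_antidiagonal.1 hij).symm, mul_comm]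

end Leibniz

section Taylor

variable {k A : Type*} [Field k] [CommSemiring A] [Algebra k A]

noncomputable def taylorLinearMap (D : Derivation k A A) : A →ₗ[k] PowerSeries A where
  toFun a := PowerSeries.mk fun s => (s.factorial : k)⁻¹ • ((D : Module.End k A) ^ s) a
  map_add' a b := by ext s; simp
  map_smul' c a := by ext s; simp [smul_comm c]

theorem coeff_taylorLinearMap (D : Derivation k A A) (a : A) (s : ℕ) :
    PowerSeries.coeff s (D.taylorLinearMap a) = (s.factorial : k)⁻¹ • (⇑D)^[s] a := by
  simp [taylorLinearMap, Module.End.pow_apply]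

theorem taylorLinearMap_one (D : Derivation k A A) : D.taylorLinearMap 1 = 1 := by
  ext s
  rw [coeff_taylorLinearMap, PowerSeries.coeff_one]
  rcases s with _ | s
  · simp
  · rw [Function.iterate_succ_apply, map_one_eq_zero, iterate_map_zero]
    simp

variable [CharZero k]

theorem taylorLinearMap_mul (D : Derivation k A A) (a b : A) :
    D.taylorLinearMap (a * b) = D.taylorLinearMap a * D.taylorLinearMap b := by
  ext s
  simp only [PowerSeries.coeff_mul, coeff_taylorLinearMap, iterate_map_mul, smul_sum]
  refine sum_congr rfl fun ij hij => ?_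
  obtain ⟨i, j⟩ := ij
  obtain rfl : i + j = s := mem_antidiagonal.1 hij
  have hfac : ((i + j).factorial : k)⁻¹ * (i + j).choose i =
      (i.factorial : k)⁻¹ * (j.factorial : k)⁻¹ := by
    have := (i + j).factorial_ne_zero
    rw [Nat.cast_add_choose]
    field_simp
  rw [← Nat.cast_smul_eq_nsmul k, smul_smul, hfac, smul_mul_smul_comm]

noncomputable def taylor (D : Derivation k A A) : A →ₐ[k] PowerSeries A :=
  .ofLinearMap D.taylorLinearMap D.taylorLinearMap_one D.taylorLinearMap_mul

theorem coeff_taylor (D : Derivation k A A) (a : A) (s : ℕ) :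
    PowerSeries.coeff s (D.taylor a) = (s.factorial : k)⁻¹ • (⇑D)^[s] a :=
  coeff_taylorLinearMap D a s

end Taylor

end Derivation

namespace PowerSeries

variable {R : Type*} [CommRing R] (N : ℕ)

theorem quotient_mk_trunc_coe (p : Polynomial R) :
    Ideal.Quotient.mk (Ideal.span {Polynomial.X ^ N}) (trunc N (p : PowerSeries R)) =
      Ideal.Quotient.mk _ p := by
  rw [Ideal.Quotient.eq, Ideal.mem_span_singleton, Polynomial.X_pow_dvd_iff]
  intro d hd
  simp [coeff_trunc, hd]

noncomputable def truncQuotient :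
    PowerSeries R →ₐ[R] Polynomial R ⧸ Ideal.span {(Polynomial.X : Polynomial R) ^ N} :=
  .ofLinearMap ((Ideal.Quotient.mkₐ R _).toLinearMap ∘ₗ trunc N)
    (by simpa using quotient_mk_trunc_coe N 1)
    (fun f g => by
      simp only [LinearMap.comp_apply, AlgHom.toLinearMap_apply, Ideal.Quotient.mkₐ_eq_mk]
      rw [← trunc_trunc_mul_trunc, ← Polynomial.coe_mul, quotient_mk_trunc_coe, map_mul])

theorem truncQuotient_apply (f : PowerSeries R) :
    truncQuotient N f =
      ∑ s ∈ range N, Ideal.Quotient.mk _ (Polynomial.C (coeff s f) * Polynomial.X ^ s) := by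
  simp [truncQuotient, trunc_apply, Polynomial.C_mul_X_pow_eq_monomial]

end PowerSeries

namespace Derivation

variable {k A : Type*} [Field k] [CharZero k] [CommRing A] [Algebra k A]

noncomputable def truncTaylor (D : Derivation k A A) (N : ℕ) :
    A →ₐ[k] A[X] ⧸ Ideal.span {(X : A[X]) ^ N} :=
  ((PowerSeries.truncQuotient N).restrictScalars k).comp D.taylor

theorem truncTaylor_apply (D : Derivation k A A) (N : ℕ) (a : A) :
    D.truncTaylor N a =
      ∑ s ∈ range N, (s.factorial : k)⁻¹ • Ideal.Quotient.mk _ (C ((⇑D)^[s] a) * X ^ s) := by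
  rw [truncTaylor, AlgHom.comp_apply, AlgHom.restrictScalars_apply,
    PowerSeries.truncQuotient_apply]
  refine sum_congr rfl fun s _ => ?_
  rw [coeff_taylor, ← smul_C, smul_mul_assoc, ← Ideal.Quotient.mkₐ_eq_mk k, _root_.map_smul]

end Derivation

theorem jetD_iterate_X (k : Type*) [CommRing k] (n m : ℕ) (i : Fin n) (j : Fin (m + 1)) :
    (⇑(jetD k n m))^[j] (MvPolynomial.X (i, 0)) = MvPolynomial.X (i, j) := by
  induction j using Fin.induction with
  | zero => rfl
  | succ j ih =>
    rw [Fin.val_succ, Function.iterate_succ_apply', ← Fin.val_castSucc, ih, jetD,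
      MvPolynomial.mkDerivation_X, dif_pos (by simp)]
    rfl

/-- the fundamental jet-scheme identity
`f(∑ x_1^{(j)} t^j/j!, …, ∑ x_n^{(j)} t^j/j!) = ∑_j (d^j f) t^j/j!`
in `A_m[t]/(t^(m+1))`. -/
theorem jet_expansion (k : Type*) [Field k] [CharZero k] (n m : ℕ)
    (f : MvPolynomial (Fin n) k) :
    MvPolynomial.aeval (R := k)
      (fun i : Fin n => ∑ j : Fin (m + 1), (((j : ℕ).factorial : k))⁻¹ •
        jetMk k n m (Polynomial.C (MvPolynomial.X (i, j)) * (X : (JetRing k n m)[X]) ^ (j : ℕ))) f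
    = ∑ j : Fin (m + 1), (((j : ℕ).factorial : k))⁻¹ •
        jetMk k n m (Polynomial.C ((⇑(jetD k n m))^[(j : ℕ)]
            (MvPolynomial.rename (fun i : Fin n => (i, (0 : Fin (m + 1)))) f))
          * (X : (JetRing k n m)[X]) ^ (j : ℕ)) := by
  have htaylor : ∀ a, (jetD k n m).truncTaylor (m + 1) a = ∑ j : Fin (m + 1),
      (((j : ℕ).factorial : k))⁻¹ • jetMk k n m (C ((⇑(jetD k n m))^[(j : ℕ)] a) * X ^ (j : ℕ)) :=
    fun a => by
      rw [Derivation.truncTaylor_apply,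
        ← Fin.sum_univ_eq_sum_range (fun s => (s.factorial : k)⁻¹ • _)]
      rfl
  calc _ = MvPolynomial.aeval
          (fun i => (jetD k n m).truncTaylor (m + 1) (MvPolynomial.X (i, 0))) f := by
        simp only [htaylor, jetD_iterate_X]
    _ = (jetD k n m).truncTaylor (m + 1) (MvPolynomial.rename (fun i => (i, 0)) f) := by
        conv_rhs => rw [MvPolynomial.aeval_unique ((jetD k n m).truncTaylor (m + 1)),
          MvPolynomial.aeval_rename]
        rfl
    _ = _ := htaylor _
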